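/- Let 𝐂 be a cartesian closed category, let J be a nonempty connected category, let D : J → 𝐂 be a diagram with colimit X = colim_j D(j), and let p : A → B be a morphism of 𝐂. If p is orthogonal to D(j) for every object j of J, then p is orthogonal to X. -/

import Mathlib

/-!
Since `Y ⊗ -` is a left adjoint, `Y ⊗ X` is the colimit of the `Y ⊗ D(j)`. Restricting a square
on `Y ⊗ X` along `Y ◁ ι_j` gives squares on the `Y ⊗ D(j)`, whose unique fillers are compatible
along the morphisms of `J`, hence all equal by connectedness. That common filler solves the
original square because the `Y ◁ ι_j` are jointly epimorphic, and it is unique because every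
filler of the original square also fills the restricted ones.
-/

open CategoryTheory CategoryTheory.Limits MonoidalCategory

universe v u

/-- In a category with (chosen) finite products, a morphism `p : A ⟶ B` is
*orthogonal* to an object `X` if every commuting square whose left edge is a
projection `Y ⊗ X ⟶ Y` and whose right edge is `p` has a unique diagonal filler. -/
def OrthogonalTo {𝒞 : Type u} [Category.{v} 𝒞] [CartesianMonoidalCategory 𝒞]
    {A B : 𝒞} (p : A ⟶ B) (X : 𝒞) : Prop :=
  ∀ (Y : 𝒞) (f : Y ⊗ X ⟶ A) (g : Y ⟶ B),
    f ≫ p = CartesianMonoidalCategory.fst Y X ≫ g →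
      ∃! h : Y ⟶ A, CartesianMonoidalCategory.fst Y X ≫ h = f ∧ h ≫ p = g

open CartesianMonoidalCategory

variable {𝒞 : Type u} [Category.{v} 𝒞] [CartesianMonoidalCategory 𝒞] {A B : 𝒞} {p : A ⟶ B}
  {X X' Y : 𝒞} {f : Y ⊗ X ⟶ A} {g : Y ⟶ B}

lemma fst_comp_eq_whiskerLeft_comp (u : X' ⟶ X) {h : Y ⟶ A} (hf : fst Y X ≫ h = f) :
    fst Y X' ≫ h = (Y ◁ u) ≫ f := by
  rw [← hf, whiskerLeft_fst_assoc]

namespace OrthogonalTo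

lemma existsUnique_filler_whiskerLeft (hp : OrthogonalTo p X') (u : X' ⟶ X)
    (hfg : f ≫ p = fst Y X ≫ g) :
    ∃! h : Y ⟶ A, fst Y X' ≫ h = (Y ◁ u) ≫ f ∧ h ≫ p = g :=
  hp Y _ g (by rw [Category.assoc, hfg, whiskerLeft_fst_assoc])

theorem of_isColimit_tensorLeft {J : Type*} [Category J] [IsConnected J] {D : J ⥤ 𝒞}
    {c : Cocone D} (hc : ∀ Y, IsColimit ((tensorLeft Y).mapCocone c))
    (hD : ∀ j, OrthogonalTo p (D.obj j)) : OrthogonalTo p c.pt := by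
  intro Y f g hfg
  choose k hk huniq using fun j ↦ (hD j).existsUnique_filler_whiskerLeft (c.ι.app j) hfg
  obtain ⟨a, hka⟩ := constant_of_preserves_morphisms' k fun j j' φ ↦
    (huniq j (k j') ⟨by rw [fst_comp_eq_whiskerLeft_comp (D.map φ) (hk j').1,
      ← whiskerLeft_comp_assoc, c.w], (hk j').2⟩).symm
  let j₀ := Classical.arbitrary J
  refine ⟨a, ⟨(hc Y).hom_ext fun j ↦ ?_, hka j₀ ▸ (hk j₀).2⟩, fun h ⟨hf, hg⟩ ↦
    hka j₀ ▸ huniq j₀ h ⟨fst_comp_eq_whiskerLeft_comp _ hf, hg⟩⟩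
  simpa [← hka j] using (hk j).1

end OrthogonalTo

/-- If `p` is orthogonal to every object in a diagram indexed by a nonempty connected
category, then `p` is orthogonal to the colimit of the diagram. -/
theorem statement_8 {𝒞 : Type u} [Category.{v} 𝒞] [CartesianMonoidalCategory 𝒞]
    [MonoidalClosed 𝒞] {J : Type u₂} [Category.{v₂} J] [IsConnected J]
    (D : J ⥤ 𝒞) (c : Limits.Cocone D) (hc : Limits.IsColimit c)
    {A B : 𝒞} (p : A ⟶ B) (h : ∀ j : J, OrthogonalTo p (D.obj j)) :
    OrthogonalTo p c.pt := by
  have (Y : 𝒞) : PreservesColimitsOfSize.{v₂, u₂} (tensorLeft Y) :=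
    (ihom.adjunction Y).leftAdjoint_preservesColimits
  exact OrthogonalTo.of_isColimit_tensorLeft (fun Y ↦ isColimitOfPreserves _ hc) h
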